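/- arXiv:2208.02945 — 2 statements merged into one kernel-verified Lean document; each statement's English description precedes it below -/
import Mathlib

section
/- Theorem 1 (beam locking time, continuous-discrete case): Let N be a positive integer, let Q > 0, T_LR > 0, κ ∈ (0,1], let φ ∈ ℝ with sin φ ≠ 0, and let μ_ζ ∈ (0,1). Define T_L = sqrt((1/μ_ζ² − 1) / (2·κ·Q·T_LR·N²·sin²φ)). Then for a real random variable ε whose law is the centered Gaussian measure with variance κ·Q·T_LR, the average power ratio satisfies E[exp(−(N·T_L·sin φ)²·ε²)] = μ_ζ. -/
open MeasureTheory ProbabilityTheory Real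
open scoped NNReal

/-!
For `ε ~ N(0, v)` the Gaussian integral gives `E[exp(-c ε²)] = (1 + 2 c v)^(-1/2)`: multiplying the
density by `exp(-c x²)` leaves a Gaussian of variance `v / (1 + 2 c v)`. The beam locking time is
chosen exactly so that `2 (N T_L sin φ)² κ Q T_LR = 1/μζ² - 1`, which makes this expectation `μζ`.
-/

lemma integral_exp_neg_mul_sq_gaussianReal (v : ℝ≥0) {c : ℝ} (hc : 0 ≤ c) :
    ∫ x, exp (-c * x ^ 2) ∂gaussianReal 0 v = (√(1 + 2 * c * v))⁻¹ := by
  rcases eq_or_ne v 0 with rfl | hv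
  · simp [gaussianReal_zero_var]
  have hv0 : (0 : ℝ) < v := by positivity
  have hdensity : ∀ x : ℝ, gaussianPDFReal 0 v x • exp (-c * x ^ 2)
      = (√(2 * π * v))⁻¹ * exp (-(c + (2 * (v : ℝ))⁻¹) * x ^ 2) := by
    intro x
    rw [gaussianPDFReal, smul_eq_mul, mul_assoc, ← exp_add]
    ring_nf
  simp_rw [integral_gaussianReal_eq_integral_smul hv, hdensity]
  rw [integral_const_mul, integral_gaussian, ← sqrt_inv, ← sqrt_mul (by positivity), ← sqrt_inv]
  congr 1
  field_simp
  ring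

/-- Theorem 1 of the paper (continuous-discrete case): with the beam locking time
`T_L = sqrt((1/μζ² − 1) / (2 κ Q T_LR N² sin² φ))` and slope-prediction error
`ε ~ N(0, κ Q T_LR)`, the average power ratio `E[exp(−(N T_L sin φ)² ε²)]`
equals the prescribed drop `μζ`. -/
theorem beam_locking_time
    {Ω : Type*} [MeasurableSpace Ω] (μ : Measure Ω) [IsProbabilityMeasure μ]
    (N : ℕ) (hN : 0 < N) (Q T_LR κ : ℝ) (hQ : 0 < Q) (hT_LR : 0 < T_LR)
    (hκ : κ ∈ Set.Ioc (0 : ℝ) 1)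
    (φ : ℝ) (hφ : Real.sin φ ≠ 0) (μζ : ℝ) (hμζ : μζ ∈ Set.Ioo (0 : ℝ) 1)
    (T_L : ℝ)
    (hT_L : T_L = Real.sqrt ((1 / μζ ^ 2 - 1) /
        (2 * κ * Q * T_LR * (N : ℝ) ^ 2 * Real.sin φ ^ 2)))
    (ε : Ω → ℝ) (hε : μ.map ε = gaussianReal 0 (κ * Q * T_LR).toNNReal) :
    ∫ ω, Real.exp (-((N : ℝ) * T_L * Real.sin φ) ^ 2 * (ε ω) ^ 2) ∂μ = μζ := by
  obtain ⟨hκ0, -⟩ := hκ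
  obtain ⟨hμζ0, hμζ1⟩ := hμζ
  have hvar : 0 < κ * Q * T_LR := by positivity
  have hlaw : HasLaw ε (gaussianReal 0 (κ * Q * T_LR).toNNReal) μ :=
    ⟨.of_map_ne_zero (hε ▸ IsProbabilityMeasure.ne_zero _), hε⟩
  have hdrop : 0 ≤ 1 / μζ ^ 2 - 1 :=
    sub_nonneg.2 (one_le_one_div (by positivity) (pow_le_one₀ hμζ0.le hμζ1.le))
  have hdenom : 0 < 2 * κ * Q * T_LR * (N : ℝ) ^ 2 * Real.sin φ ^ 2 := by positivity
  have hgain : 2 * ((N : ℝ) * T_L * sin φ) ^ 2 * (κ * Q * T_LR) = 1 / μζ ^ 2 - 1 :=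
    calc 2 * ((N : ℝ) * T_L * sin φ) ^ 2 * (κ * Q * T_LR)
        = (2 * κ * Q * T_LR * (N : ℝ) ^ 2 * sin φ ^ 2) * T_L ^ 2 := by ring
      _ = 1 / μζ ^ 2 - 1 := by
        rw [hT_L, sq_sqrt (div_nonneg hdrop hdenom.le), mul_div_cancel₀ _ hdenom.ne']
  calc ∫ ω, exp (-((N : ℝ) * T_L * sin φ) ^ 2 * ε ω ^ 2) ∂μ
      = ∫ x, exp (-((N : ℝ) * T_L * sin φ) ^ 2 * x ^ 2) ∂gaussianReal 0 (κ * Q * T_LR).toNNReal :=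
        hlaw.integral_comp (f := fun x ↦ exp (-((N : ℝ) * T_L * sin φ) ^ 2 * x ^ 2))
          (by fun_prop)
    _ = μζ := by
      rw [integral_exp_neg_mul_sq_gaussianReal _ (sq_nonneg _), coe_toNNReal _ hvar.le, hgain,
        add_sub_cancel, one_div, sqrt_inv, sqrt_sq hμζ0.le, inv_inv]
end

section
/- Theorem 2 (outage-based pilot period): Let N be a positive integer, Q > 0, T_LR > 0, κ ∈ (0,1], φ ∈ ℝ with sin φ ≠ 0, ρ > 0, let R_f > 0 satisfy 2^{R_f} − 1 < ρ, let P_out ∈ (0,1), and let q > 0 satisfy Q(q) = P_out/2 where Q is the standard Gaussian tail function. Define T_o = sqrt( log(ρ/(2^{R_f} − 1)) / (N²·sin²φ·κ·Q·T_LR·q²) ). Then for a real random variable ε with law N(0, κ·Q·T_LR), the outage probability at fixed rate R_f satisfies P( ρ·exp(−(N·T_o·sin φ)²·ε²) ≤ 2^{R_f} − 1 ) = P_out. -/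
open MeasureTheory ProbabilityTheory

/-- The standard Gaussian tail function `Q(x) = ∫_x^∞ (2π)^(-1/2) exp(-t²/2) dt`. -/
noncomputable def gaussTail (x : ℝ) : ℝ :=
  ∫ t in Set.Ioi x, (Real.sqrt (2 * Real.pi))⁻¹ * Real.exp (-t ^ 2 / 2)

/-!
Outage happens exactly when `|ε|` exceeds `√(log (ρ / (2^Rf - 1))) / |N T_o sin φ|`, and `T_o` is
tuned so that this threshold is `q` standard deviations of `ε`. The outage probability is therefore
`P(|Z| ≥ q)` for a standard normal `Z`, which by symmetry of the Gaussian is `2 Q(q) = P_out`.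
-/

open Set
open scoped NNReal

lemma gaussTail_eq_measureReal_Ioi (x : ℝ) :
    gaussTail x = (gaussianReal 0 1).real (Ioi x) := by
  rw [measureReal_def, gaussianReal_apply_eq_integral 0 one_ne_zero, ENNReal.toReal_ofReal
    (setIntegral_nonneg measurableSet_Ioi fun t _ ↦ gaussianPDFReal_nonneg _ _ _)]
  simp [gaussTail, gaussianPDFReal]

lemma measureReal_gaussianReal_Iic_neg (v : ℝ≥0) (x : ℝ) :
    (gaussianReal 0 v).real (Iic (-x)) = (gaussianReal 0 v).real (Ici x) := by
  conv_lhs => rw [← neg_zero, ← gaussianReal_map_neg]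
  rw [map_measureReal_apply measurable_neg measurableSet_Iic]
  simp

lemma measureReal_gaussianReal_le_abs {q : ℝ} (hq : 0 < q) :
    (gaussianReal 0 1).real {x | q ≤ |x|} = 2 * gaussTail q := by
  have hsplit : {x : ℝ | q ≤ |x|} = Iic (-q) ∪ Ici q := by
    ext x; simp only [mem_ofPred_eq, mem_union, mem_Iic, mem_Ici, le_abs', or_comm]
  have := nullSingletonClass_gaussianReal (μ := 0) one_ne_zero
  rw [hsplit, measureReal_union (Iic_disjoint_Ici.2 (by linarith)) measurableSet_Ici,
    measureReal_gaussianReal_Iic_neg, measureReal_congr Ioi_ae_eq_Ici.symm,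
    gaussTail_eq_measureReal_Ioi]
  ring

lemma gaussianReal_div_sqrt {Ω : Type*} [MeasurableSpace Ω] {P : Measure Ω} {X : Ω → ℝ}
    {v : ℝ≥0} (hv : v ≠ 0) (hX : HasLaw X (gaussianReal 0 v) P) :
    HasLaw (fun ω ↦ X ω / √(v : ℝ)) (gaussianReal 0 1) P := by
  convert gaussianReal_div_const hX √(v : ℝ) using 2
  · simp
  · ext; simp [hv]

lemma mul_exp_neg_mul_sq_le_iff {ρ c a s x : ℝ} (hc : 0 < c) (hcρ : c < ρ) (hs : 0 ≤ s)
    (has : a * s ^ 2 = Real.log (ρ / c)) :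
    ρ * Real.exp (-a * x ^ 2) ≤ c ↔ s ≤ |x| := by
  have hρ : 0 < ρ := hc.trans hcρ
  have hL : 0 < Real.log (ρ / c) := Real.log_pos ((one_lt_div hc).2 hcρ)
  have ha : 0 < a := pos_of_mul_pos_left (has ▸ hL) (sq_nonneg s)
  calc ρ * Real.exp (-a * x ^ 2) ≤ c ↔ Real.log (ρ / c) ≤ a * x ^ 2 := by
        rw [← le_div_iff₀' hρ, ← Real.le_log_iff_exp_le (div_pos hc hρ),
          Real.log_div hc.ne' hρ.ne', Real.log_div hρ.ne' hc.ne']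
        constructor <;> intro h <;> linarith
    _ ↔ s ^ 2 ≤ x ^ 2 := by rw [← has, mul_le_mul_iff_right₀ ha]
    _ ↔ s ≤ |x| := by rw [← sq_abs x, pow_le_pow_iff_left₀ hs (abs_nonneg x) two_ne_zero]

theorem outage_pilot_period_general
    {Ω : Type*} [MeasurableSpace Ω] (μ : Measure Ω) [IsProbabilityMeasure μ]
    (N : ℕ) (hN : 0 < N) (Q T_LR κ : ℝ) (hQ : 0 < Q) (hT_LR : 0 < T_LR)
    (hκ : κ ∈ Set.Ioc (0 : ℝ) 1)
    (φ : ℝ) (hφ : Real.sin φ ≠ 0) (ρ : ℝ)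
    (Rf : ℝ) (hRf : 0 < Rf) (hRfρ : (2 : ℝ) ^ Rf - 1 < ρ)
    (P_out : ℝ)
    (q : ℝ) (hq : 0 < q) (hqP : gaussTail q = P_out / 2)
    (T_o : ℝ)
    (hT_o : T_o = Real.sqrt (Real.log (ρ / ((2 : ℝ) ^ Rf - 1)) /
        ((N : ℝ) ^ 2 * Real.sin φ ^ 2 * κ * Q * T_LR * q ^ 2)))
    (ε : Ω → ℝ) (hε : μ.map ε = gaussianReal 0 (κ * Q * T_LR).toNNReal) :
    (μ {ω | ρ * Real.exp (-((N : ℝ) * T_o * Real.sin φ) ^ 2 * (ε ω) ^ 2)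
        ≤ (2 : ℝ) ^ Rf - 1}).toReal = P_out := by
  obtain ⟨hκ0, -⟩ := hκ
  have hN0 : (0 : ℝ) < N := Nat.cast_pos.2 hN
  set c := (2 : ℝ) ^ Rf - 1
  have hc : 0 < c := sub_pos.2 (Real.one_lt_rpow one_lt_two hRf)
  have hv : 0 < κ * Q * T_LR := by positivity
  have hX : HasLaw (fun ω ↦ ε ω / √(κ * Q * T_LR)) (gaussianReal 0 1) μ := by
    simpa [Real.coe_toNNReal _ hv.le] using gaussianReal_div_sqrt (by simpa using hv)
      ⟨aemeasurable_of_map_neZero (by rw [hε]; infer_instance), hε⟩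
  -- `T_o` is chosen so that the outage threshold on `|ε|` is `q` standard deviations.
  have hthreshold : ((N : ℝ) * T_o * Real.sin φ) ^ 2 * (√(κ * Q * T_LR) * q) ^ 2
      = Real.log (ρ / c) := by
    have hL : 0 ≤ Real.log (ρ / c) := (Real.log_pos ((one_lt_div hc).2 hRfρ)).le
    rw [hT_o, mul_pow, mul_pow, mul_pow, Real.sq_sqrt (by positivity), Real.sq_sqrt hv.le]
    field_simp
  have hevent (x : ℝ) : ρ * Real.exp (-((N : ℝ) * T_o * Real.sin φ) ^ 2 * x ^ 2) ≤ c
      ↔ q ≤ |x / √(κ * Q * T_LR)| := by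
    rw [mul_exp_neg_mul_sq_le_iff hc hRfρ (by positivity) hthreshold, abs_div,
      abs_of_pos (Real.sqrt_pos.2 hv), le_div_iff₀ (Real.sqrt_pos.2 hv), mul_comm]
  simp_rw [hevent, ← measureReal_def]
  rw [hX.measureReal_eq (p := fun x ↦ q ≤ |x|)
      (measurableSet_le measurable_const measurable_abs), measureReal_gaussianReal_le_abs hq, hqP]
  ring

/-- Theorem 2 of the paper (outage-based pilot period): with
`T_o = sqrt( log(ρ/(2^Rf − 1)) / (N² sin²φ κ Q T_LR q²) )` where `q > 0`
satisfies `Q(q) = P_out/2`, and slope error `ε ~ N(0, κ Q T_LR)`, the outage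
probability at fixed rate `Rf` equals `P_out`. -/
theorem outage_pilot_period
    {Ω : Type*} [MeasurableSpace Ω] (μ : Measure Ω) [IsProbabilityMeasure μ]
    (N : ℕ) (hN : 0 < N) (Q T_LR κ : ℝ) (hQ : 0 < Q) (hT_LR : 0 < T_LR)
    (hκ : κ ∈ Set.Ioc (0 : ℝ) 1)
    (φ : ℝ) (hφ : Real.sin φ ≠ 0) (ρ : ℝ) (hρ : 0 < ρ)
    (Rf : ℝ) (hRf : 0 < Rf) (hRfρ : (2 : ℝ) ^ Rf - 1 < ρ)
    (P_out : ℝ) (hP_out : P_out ∈ Set.Ioo (0 : ℝ) 1)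
    (q : ℝ) (hq : 0 < q) (hqP : gaussTail q = P_out / 2)
    (T_o : ℝ)
    (hT_o : T_o = Real.sqrt (Real.log (ρ / ((2 : ℝ) ^ Rf - 1)) /
        ((N : ℝ) ^ 2 * Real.sin φ ^ 2 * κ * Q * T_LR * q ^ 2)))
    (ε : Ω → ℝ) (hε : μ.map ε = gaussianReal 0 (κ * Q * T_LR).toNNReal) :
    (μ {ω | ρ * Real.exp (-((N : ℝ) * T_o * Real.sin φ) ^ 2 * (ε ω) ^ 2)
        ≤ (2 : ℝ) ^ Rf - 1}).toReal = P_out :=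
  outage_pilot_period_general μ N hN Q T_LR κ hQ hT_LR hκ φ hφ ρ Rf hRf hRfρ P_out q hq hqP T_o hT_o
    ε hε
end
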